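/- For every integer d ≥ 2, the set Z_{d,G} = {x ∈ T : liminf_{N→∞} |∑_{n=1}^{N} exp(2πi x n^d)| = 0} contains a dense G_δ subset of T = R/Z. -/

import Mathlib

/-!
For `x = a / (2m)` with `a`, `m` odd, `ζ = e(x)` satisfies `ζ ^ m = -1`, and
`(n + m) ^ d ≡ n ^ d + m [MOD 2m]` for `d ≥ 1`, so `n ↦ ζ ^ (n ^ d)` is antiperiodic with
antiperiod `m` and `G_d(x; 2mK) = 0` for every `K`. Such `x` are dense, and for each `k` the set
of `x` with `|G_d(x; N)| < 1/(k+1)` for infinitely many `N` is a `G_δ` by continuity of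
`G_d(·; N)`; their intersection is the required dense `G_δ` set.
-/

open Complex Filter

/-- The monomial (generalised Gaussian) sum `G_d(x; N) = ∑_{n=1}^N e(x n^d)`. -/
noncomputable def monomialSum (d : ℕ) (x : ℝ) (N : ℕ) : ℂ :=
  ∑ n ∈ Finset.Icc 1 N, Complex.exp (2 * Real.pi * Complex.I * (x : ℂ) * (n : ℂ) ^ d)

lemma Function.Antiperiodic.sum_range_two_mul_mul_eq_zero {M : Type*} [AddCommGroup M]
    {g : ℕ → M} {m : ℕ} (hg : Function.Antiperiodic g m) (K : ℕ) :
    ∑ n ∈ Finset.range (2 * m * K), g n = 0 := by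
  induction K generalizing g with
  | zero => simp
  | succ K ih =>
    have hblock : ∑ n ∈ Finset.range (2 * m), g (2 * m * K + n) = 0 := by
      rw [two_mul, Finset.sum_range_add, ← Finset.sum_add_distrib]
      refine Finset.sum_eq_zero fun n _ => ?_
      rw [← add_assoc, add_right_comm, hg, add_neg_cancel]
    rw [mul_add_one, Finset.sum_range_add, ih hg, hblock, add_zero]

lemma Nat.pow_modEq_self_two {d : ℕ} (hd : d ≠ 0) (t : ℕ) : t ^ d ≡ t [MOD 2] := by
  unfold Nat.ModEq
  rw [Nat.pow_mod]
  rcases Nat.mod_two_eq_zero_or_one t with h | h <;> simp [h, hd]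

lemma Nat.add_pow_modEq_add_of_odd {m : ℕ} (hm : Odd m) {d : ℕ} (hd : d ≠ 0) (n : ℕ) :
    (n + m) ^ d ≡ n ^ d + m [MOD 2 * m] := by
  have hmod_two : (n + m) ^ d ≡ n ^ d + m [MOD 2] :=
    (Nat.pow_modEq_self_two hd _).trans ((Nat.pow_modEq_self_two hd n).symm.add_right m)
  have hmod_m : (n + m) ^ d ≡ n ^ d + m [MOD m] :=
    (Nat.add_modEq_right.pow d).trans Nat.add_modEq_right.symm
  exact (Nat.modEq_and_modEq_iff_modEq_mul (Nat.coprime_two_left.mpr hm)).mp ⟨hmod_two, hmod_m⟩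

lemma antiperiodic_pow_pow {R : Type*} [Monoid R] [HasDistribNeg R] {ζ : R} {m : ℕ}
    (hζ : ζ ^ m = -1) (hm : Odd m) {d : ℕ} (hd : d ≠ 0) :
    Function.Antiperiodic (fun n : ℕ => ζ ^ (n ^ d)) m := by
  intro n
  have hperiod : ζ ^ (2 * m) = 1 := by rw [pow_mul', hζ, neg_one_sq]
  show ζ ^ ((n + m) ^ d) = -ζ ^ (n ^ d)
  rw [pow_eq_pow_mod _ hperiod, Nat.add_pow_modEq_add_of_odd hm hd n, ← pow_eq_pow_mod _ hperiod,
    pow_add, hζ, mul_neg_one]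

lemma isGδ_setOf_frequently_mem {X Y : Type*} [TopologicalSpace X] [TopologicalSpace Y]
    {f : ℕ → X → Y} (hf : ∀ n, Continuous (f n)) {U : Set Y} (hU : IsOpen U) :
    IsGδ {x | ∃ᶠ n in atTop, f n x ∈ U} := by
  have hset : {x | ∃ᶠ n in atTop, f n x ∈ U} = ⋂ M, ⋃ n ≥ M, f n ⁻¹' U := by
    ext; simp [frequently_atTop]
  rw [hset]
  exact IsGδ.iInter fun M => (isOpen_biUnion fun n _ => hU.preimage (hf n)).isGδ

lemma liminf_eq_zero_of_frequently_lt_one_div {ι : Type*} {l : Filter ι} {u : ι → ℝ}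
    (hu : ∀ i, 0 ≤ u i) (h : ∀ k : ℕ, ∃ᶠ i in l, u i < 1 / (k + 1)) : liminf u l = 0 := by
  have hbdd : IsBoundedUnder (· ≥ ·) l u := isBoundedUnder_of ⟨0, hu⟩
  have hle : ∀ k : ℕ, liminf u l ≤ 1 / (k + 1) := fun k =>
    liminf_le_of_frequently_le ((h k).mono fun _ => le_of_lt) hbdd
  have hcobdd : IsCoboundedUnder (· ≥ ·) l u :=
    IsCoboundedUnder.of_frequently_le ((h 0).mono fun _ => le_of_lt)
  exact le_antisymm (ge_of_tendsto' tendsto_one_div_add_atTop_nhds_zero_nat hle)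
    (le_liminf_of_le hcobdd (Eventually.of_forall hu))

lemma dense_setOf_odd_div_two_mul_odd :
    Dense {x : ℝ | ∃ (a : ℤ) (m : ℕ), Odd a ∧ Odd m ∧ x = a / (2 * m)} := by
  refine dense_iff_exists_between.mpr fun x y hxy => ?_
  obtain ⟨M, hM⟩ := exists_nat_gt (2 / (y - x))
  set m := 2 * M + 1
  have hspread : 2 < m * (y - x) := by
    have := (div_lt_iff₀ (sub_pos.mpr hxy)).mp hM
    push_cast [m]
    nlinarith
  set a : ℤ := 2 * (⌊m * x⌋ + 1) + 1
  refine ⟨a / (2 * m), ⟨a, m, ⟨_, rfl⟩, ⟨M, rfl⟩, rfl⟩, ?_, ?_⟩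
  · rw [lt_div_iff₀ (by positivity)]
    have := Int.lt_floor_add_one (m * x)
    push_cast [a]
    linarith
  · rw [div_lt_iff₀ (by positivity)]
    have := Int.floor_le (m * x)
    push_cast [a]
    linarith

lemma exp_two_pi_I_mul_odd_div_pow {a : ℤ} (ha : Odd a) {m : ℕ} (hm : m ≠ 0) :
    Complex.exp (2 * Real.pi * I * ((a / (2 * m) : ℝ) : ℂ)) ^ m = -1 := by
  rw [← Complex.exp_nat_mul]
  obtain ⟨k, rfl⟩ := ha
  have hexponent : (m : ℂ) * (2 * Real.pi * I * (((2 * k + 1 : ℤ) / (2 * m) : ℝ) : ℂ)) =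
      k * (2 * Real.pi * I) + Real.pi * I := by
    push_cast
    field_simp
  rw [hexponent, Complex.exp_add, Complex.exp_int_mul_two_pi_mul_I, Complex.exp_pi_mul_I, one_mul]

lemma monomialSum_eq_sum_range (d : ℕ) (x : ℝ) (N : ℕ) :
    monomialSum d x N =
      ∑ n ∈ Finset.range N, Complex.exp (2 * Real.pi * I * x) ^ ((n + 1) ^ d) := by
  rw [Finset.range_eq_Ico,
    Finset.sum_Ico_add' (fun k => Complex.exp (2 * Real.pi * I * x) ^ k ^ d), zero_add,
    Finset.Ico_add_one_right_eq_Icc, monomialSum]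
  refine Finset.sum_congr rfl fun n _ => ?_
  rw [← Complex.exp_nat_mul]
  push_cast
  ring_nf

lemma continuous_monomialSum (d : ℕ) (N : ℕ) : Continuous fun x => monomialSum d x N := by
  unfold monomialSum
  fun_prop

lemma monomialSum_odd_div_two_mul_eq_zero {d : ℕ} (hd : d ≠ 0) {a : ℤ} (ha : Odd a) {m : ℕ}
    (hm : Odd m) (K : ℕ) : monomialSum d (a / (2 * m)) (2 * m * K) = 0 := by
  rw [monomialSum_eq_sum_range]
  exact ((antiperiodic_pow_pow (exp_two_pi_I_mul_odd_div_pow ha hm.pos.ne') hm hd).add_const 1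
    ).sum_range_two_mul_mul_eq_zero K

lemma frequently_monomialSum_eq_zero {d : ℕ} (hd : d ≠ 0) {a : ℤ} (ha : Odd a) {m : ℕ}
    (hm : Odd m) : ∃ᶠ N in atTop, monomialSum d (a / (2 * m)) N = 0 :=
  frequently_atTop.mpr fun M =>
    ⟨2 * m * M, Nat.le_mul_of_pos_left M (Nat.mul_pos two_pos hm.pos),
      monomialSum_odd_div_two_mul_eq_zero hd ha hm M⟩

theorem zero_set_monomial_contains_dense_Gdelta (d : ℕ) (hd : 2 ≤ d) :
    ∃ G : Set ℝ, IsGδ G ∧ Dense G ∧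
      G ⊆ {x : ℝ | atTop.liminf (fun N => ‖monomialSum d x N‖) = 0} := by
  have hd0 : d ≠ 0 := by omega
  refine ⟨⋂ k : ℕ, {x | ∃ᶠ N in atTop, ‖monomialSum d x N‖ ∈ Set.Iio (1 / (k + 1 : ℝ))},
    ?_, ?_, ?_⟩
  · exact .iInter fun k =>
      isGδ_setOf_frequently_mem (fun N => (continuous_monomialSum d N).norm) isOpen_Iio
  · refine dense_setOf_odd_div_two_mul_odd.mono ?_
    rintro _ ⟨a, m, ha, hm, rfl⟩
    refine Set.mem_iInter.mpr fun k => (frequently_monomialSum_eq_zero hd0 ha hm).mono ?_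
    intro N hN
    simp only [hN, norm_zero, Set.mem_Iio]
    positivity
  · exact fun x hx =>
      liminf_eq_zero_of_frequently_lt_one_div (fun N => norm_nonneg _) (Set.mem_iInter.mp hx)
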